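/- Let p ≥ 1, let a_{1k}, a_{2k}, a_{3k} ∈ ℝ (k = 1,…,p), let l, m, q : ℝ → ℝ and U, V, W : ℝ → ℝ be C¹ functions, and define u(s,t) = Σ_{k=1}^p a_{1k} l(s)^k U(t)^k, v(s,t) = Σ_{k=1}^p a_{2k} m(s)^k V(t)^k, w(s,t) = Σ_{k=1}^p a_{3k} q(s)^k W(t)^k. Suppose U(t₀) = V(t₀) = W(t₀) = 0, θ(s) = θ₀ − ∫₀ˢ τ(σ) dσ, and there is λ : ℝ → ℝ with λ(s) ≠ 0 such that a_{21} m(s) V'(t₀) = −λ(s) sinh θ(s) and a_{31} q(s) W'(t₀) = −λ(s) cosh θ(s) for all s. Then P(s,t₀) = r(s) for all s and the surface normal satisfies n(s,t₀) = λ(s)·(cosh θ(s)·N(s) + sinh θ(s)·B(s)) for all s. -/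

import Mathlib

noncomputable section

/-- Lorentzian inner product on Minkowski 3-space `ℝ₁³`. -/
def minkDot (X Y : ℝ × ℝ × ℝ) : ℝ := X.1 * Y.1 + X.2.1 * Y.2.1 - X.2.2 * Y.2.2

/-- Lorentzian vector product on Minkowski 3-space `ℝ₁³`. -/
def lcross (X Y : ℝ × ℝ × ℝ) : ℝ × ℝ × ℝ :=
  (X.2.1 * Y.2.2 - X.2.2 * Y.2.1, X.2.2 * Y.1 - X.1 * Y.2.2, X.2.1 * Y.1 - X.1 * Y.2.1)

/-- Lorentzian norm `‖X‖ = √|⟨X,X⟩|`. -/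
def mnorm (X : ℝ × ℝ × ℝ) : ℝ := Real.sqrt |minkDot X X|


lemma lcross_expand (X Y Z : ℝ × ℝ × ℝ) (a b c : ℝ) :
    lcross X (a • X + b • Y + c • Z) = b • lcross X Y + c • lcross X Z := by
  simp only [lcross, Prod.smul_fst, Prod.smul_snd, Prod.fst_add, Prod.snd_add,
    smul_eq_mul, Prod.mk_add_mk, Prod.smul_mk, Prod.ext_iff]
  refine ⟨by ring, by ring, by ring⟩

lemma lcross_antisymm (X Y : ℝ × ℝ × ℝ) : lcross X Y = -lcross Y X := by
  simp only [lcross, Prod.neg_mk, Prod.ext_iff]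
  refine ⟨by ring, by ring, by ring⟩

lemma sum_hasDeriv (p : ℕ) (hp : 1 ≤ p) (a : ℕ → ℝ) (c : ℝ) (U : ℝ → ℝ) (t₀ : ℝ)
    (hU : DifferentiableAt ℝ U t₀) (hU0 : U t₀ = 0) :
    HasDerivAt (fun t => ∑ k ∈ Finset.Icc 1 p, a k * c ^ k * U t ^ k)
      (a 1 * c * deriv U t₀) t₀ := by
  have h : HasDerivAt (fun t => ∑ k ∈ Finset.Icc 1 p, a k * c ^ k * U t ^ k)
      (∑ k ∈ Finset.Icc 1 p, a k * c ^ k * (k * U t₀ ^ (k - 1) * deriv U t₀)) t₀ :=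
    HasDerivAt.fun_sum (fun k _ => ((hU.hasDerivAt.pow k).const_mul (a k * c ^ k)))
  convert h using 1
  rw [Finset.sum_eq_single_of_mem 1 (by simp [hp])]
  · simp [hU0]
  · intro k hk hk1
    have : k - 1 ≠ 0 := by simp at hk; omega
    simp [hU0, zero_pow this]

/-- Sufficient conditions in the polynomial form of the marching-scale functions. -/
theorem surface_pencil_polynomial_spacelike_timelikeBinormal
    (r T N B : ℝ → ℝ × ℝ × ℝ) (κ τ : ℝ → ℝ)
    (hr : ContDiff ℝ (⊤ : ℕ∞) r) (hT : ContDiff ℝ (⊤ : ℕ∞) T) (hN : ContDiff ℝ (⊤ : ℕ∞) N)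
    (hB : ContDiff ℝ (⊤ : ℕ∞) B) (hκ : ContDiff ℝ (⊤ : ℕ∞) κ) (hτ : ContDiff ℝ (⊤ : ℕ∞) τ)
    (hrT : ∀ s, deriv r s = T s)
    (hT' : ∀ s, deriv T s = κ s • N s)
    (hN' : ∀ s, deriv N s = (-κ s) • T s + τ s • B s)
    (hB' : ∀ s, deriv B s = τ s • N s)
    (hTT : ∀ s, minkDot (T s) (T s) = 1)
    (hNN : ∀ s, minkDot (N s) (N s) = 1)
    (hBB : ∀ s, minkDot (B s) (B s) = -1)
    (hTN : ∀ s, minkDot (T s) (N s) = 0)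
    (hTB : ∀ s, minkDot (T s) (B s) = 0)
    (hNB : ∀ s, minkDot (N s) (B s) = 0)
    (hTxN : ∀ s, lcross (T s) (N s) = -B s)
    (hNxB : ∀ s, lcross (N s) (B s) = T s)
    (hBxT : ∀ s, lcross (B s) (T s) = N s)
    (u v w : ℝ → ℝ → ℝ)
    (t₀ : ℝ) (P n : ℝ → ℝ → ℝ × ℝ × ℝ)
    (hP : ∀ s t, P s t = r s + u s t • T s + v s t • N s + w s t • B s)
    (hn : ∀ s t, n s t = lcross (deriv (fun σ => P σ t) s) (deriv (fun t' => P s t') t))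
    (p : ℕ) (hp : 1 ≤ p)
    (a1 a2 a3 : ℕ → ℝ)
    (l m q U V W : ℝ → ℝ)
    (hl : ContDiff ℝ 1 l) (hm : ContDiff ℝ 1 m) (hq : ContDiff ℝ 1 q)
    (hU : ContDiff ℝ 1 U) (hV : ContDiff ℝ 1 V) (hW : ContDiff ℝ 1 W)
    (hu : ∀ s t, u s t = ∑ k ∈ Finset.Icc 1 p, a1 k * l s ^ k * U t ^ k)
    (hv : ∀ s t, v s t = ∑ k ∈ Finset.Icc 1 p, a2 k * m s ^ k * V t ^ k)
    (hw : ∀ s t, w s t = ∑ k ∈ Finset.Icc 1 p, a3 k * q s ^ k * W t ^ k)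
    (hU0 : U t₀ = 0) (hV0 : V t₀ = 0) (hW0 : W t₀ = 0)
    (θ₀ : ℝ) (θ : ℝ → ℝ) (hθ : ∀ s, θ s = θ₀ - ∫ σ in (0:ℝ)..s, τ σ)
    (lam : ℝ → ℝ) (hlam : ∀ s, lam s ≠ 0)
    (hV' : ∀ s, a2 1 * m s * deriv V t₀ = -(lam s * Real.sinh (θ s)))
    (hW' : ∀ s, a3 1 * q s * deriv W t₀ = -(lam s * Real.cosh (θ s))) :
    ∀ s, P s t₀ = r s ∧
      n s t₀ = lam s • (Real.cosh (θ s) • N s + Real.sinh (θ s) • B s) := by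
  intro s
  have hz : ∀ (a : ℕ → ℝ) (c : ℝ) (F : ℝ → ℝ), F t₀ = 0 →
      (∑ k ∈ Finset.Icc 1 p, a k * c ^ k * F t₀ ^ k) = 0 := by
    intro a c F hF
    refine Finset.sum_eq_zero fun k hk => ?_
    have : k ≠ 0 := by simp at hk; omega
    simp [hF, zero_pow this]
  have hPt0 : ∀ σ, P σ t₀ = r σ := by
    intro σ
    rw [hP, hu, hv, hw, hz a1 _ U hU0, hz a2 _ V hV0, hz a3 _ W hW0]
    simp
  refine ⟨hPt0 s, ?_⟩
  have hds : deriv (fun σ => P σ t₀) s = T s := by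
    have h : (fun σ => P σ t₀) = r := funext hPt0
    rw [h, hrT]
  set c1 := a1 1 * l s * deriv U t₀ with hc1
  set c2 := a2 1 * m s * deriv V t₀ with hc2
  set c3 := a3 1 * q s * deriv W t₀ with hc3
  have hdt : deriv (fun t' => P s t') t₀ = c1 • T s + c2 • N s + c3 • B s := by
    have hfun : (fun t' => P s t') = fun t' =>
        r s + (∑ k ∈ Finset.Icc 1 p, a1 k * l s ^ k * U t' ^ k) • T s
          + (∑ k ∈ Finset.Icc 1 p, a2 k * m s ^ k * V t' ^ k) • N s
          + (∑ k ∈ Finset.Icc 1 p, a3 k * q s ^ k * W t' ^ k) • B s := by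
      funext t'; rw [hP, hu, hv, hw]
    rw [hfun]
    have hdd : HasDerivAt (fun t' =>
        r s + (∑ k ∈ Finset.Icc 1 p, a1 k * l s ^ k * U t' ^ k) • T s
          + (∑ k ∈ Finset.Icc 1 p, a2 k * m s ^ k * V t' ^ k) • N s
          + (∑ k ∈ Finset.Icc 1 p, a3 k * q s ^ k * W t' ^ k) • B s)
        (0 + c1 • T s + c2 • N s + c3 • B s) t₀ :=
      (((hasDerivAt_const t₀ (r s)).add
        ((sum_hasDeriv p hp a1 (l s) U t₀ ((hU.differentiable one_ne_zero) t₀) hU0).smul_const (T s))).add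
        ((sum_hasDeriv p hp a2 (m s) V t₀ ((hV.differentiable one_ne_zero) t₀) hV0).smul_const (N s))).add
        ((sum_hasDeriv p hp a3 (q s) W t₀ ((hW.differentiable one_ne_zero) t₀) hW0).smul_const (B s))
    rw [hdd.deriv, zero_add]
  rw [hn, hds, hdt, lcross_expand (T s) (N s) (B s) c1 c2 c3, hTxN,
    lcross_antisymm (T s) (B s), hBxT, hc2, hc3, hV' s, hW' s]
  module
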